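/- Let R be a commutative ℚ-algebra, and let f, g ∈ R((t))* with f ∈ 1 + t·R[[t]] (or more generally with the property that log f is defined, i.e. f = 1 + h with residue computations valid). Then res(log f · dg/g) is a nilpotent element of R, where res takes the coefficient of t^{-1} dt. -/

import Mathlib

/-!
Nilpotent elements are those lying in every prime ideal, so it suffices to show that the residue
vanishes after reduction modulo any prime, i.e. over an integral domain `K`. There a unit `g` of
`K((t))` is `t^d P` and its inverse is `t^(-d) Q` with `P, Q ∈ K[[t]]` (orders add up to zero), so
`log f · g' · g⁻¹ = d t⁻¹ · (log f · P Q) + log f · P' Q`. The second term is a power series, and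
the residue of the first is `d` times the constant term of `log f · P Q`, which is zero because
`log f ∈ t K[[t]]`.
-/

noncomputable section

namespace CC

variable {R : Type*} [CommRing R]

/-- Formal derivative of a Laurent series. -/
def DerivT (f : LaurentSeries R) : LaurentSeries R where
  coeff n := (n + 1) • f.coeff (n + 1)
  isPWO_support' := by
    have hsub : Function.support (fun n : ℤ => (n + 1) • f.coeff (n + 1)) ⊆
        (fun n : ℤ => n - 1) '' Function.support f.coeff := by
      intro n hn
      have h1 : (n + 1) • f.coeff (n + 1) ≠ 0 := hn
      have h2 : f.coeff (n + 1) ≠ 0 := fun h => h1 (by rw [h, smul_zero])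
      exact ⟨n + 1, h2, by ring⟩
    have hmono : Monotone fun n : ℤ => n - 1 := fun a b h => by dsimp only; omega
    exact (Set.IsPWO.image_of_monotoneOn f.isPWO_support' (hmono.monotoneOn _)).mono hsub

@[simp] lemma DerivT_coeff (f : LaurentSeries R) (n : ℤ) :
    (DerivT f).coeff n = (n + 1) • f.coeff (n + 1) := rfl

/-- The formal logarithm of a power series `f` with constant term `1` over a `ℚ`-algebra:
`log f = −∑_{p≥1} (1−f)^p / p`.  Since `(1−f)^p` has order at least `p`, the `n`-th
coefficient only involves the terms with `p ≤ n`. -/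
def logS [Algebra ℚ R] (f : PowerSeries R) : PowerSeries R :=
  PowerSeries.mk fun n =>
    PowerSeries.coeff n (-(∑ p ∈ Finset.Icc 1 n, ((p : ℚ)⁻¹) • (1 - f) ^ p))

open scoped PowerSeries LaurentSeries

lemma DerivT_ofPowerSeries (p : R⟦X⟧) : DerivT (p : R⸨X⸩) = (d⁄dX R p : R⸨X⸩) := by
  ext n
  rw [DerivT_coeff, PowerSeries.coeff_coe, PowerSeries.coeff_coe]
  rcases lt_trichotomy n (-1) with hn | rfl | hn
  · rw [if_pos (by omega), if_pos (by omega), smul_zero]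
  · simp
  · lift n to ℕ using (by omega)
    rw [if_neg (by omega), if_neg (by omega), PowerSeries.coeff_derivative,
      show ((n : ℤ) + 1).natAbs = n + 1 by omega, Int.natAbs_natCast, zsmul_eq_mul, mul_comm]
    push_cast
    rfl

lemma DerivT_single_one_mul (d : ℤ) (x : R⸨X⸩) :
    DerivT (HahnSeries.single d 1 * x) =
      HahnSeries.single (d - 1) (d : R) * x + HahnSeries.single d 1 * DerivT x := by
  ext n
  obtain ⟨m, rfl⟩ : ∃ m, n = m + d - 1 := ⟨n - d + 1, by ring⟩
  have h₁ := HahnSeries.coeff_single_mul_add (r := (1 : R)) (x := x) (a := m) (b := d)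
  have h₂ := HahnSeries.coeff_single_mul_add (r := (d : R)) (x := x) (a := m) (b := d - 1)
  have h₃ := HahnSeries.coeff_single_mul_add (r := (1 : R)) (x := DerivT x) (a := m - 1) (b := d)
  rw [show m + (d - 1) = m + d - 1 by ring] at h₂
  rw [show m - 1 + d = m + d - 1 by ring] at h₃
  rw [HahnSeries.coeff_add, DerivT_coeff, sub_add_cancel, h₁, h₂, h₃, DerivT_coeff, sub_add_cancel,
    one_mul, one_mul, zsmul_eq_mul, zsmul_eq_mul, ← add_mul]
  push_cast
  ring

lemma coeff_neg_one_ofPowerSeries_mul_DerivT_mul_eq_zero {l : R⟦X⟧}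
    (hl : PowerSeries.constantCoeff l = 0) (p q : R⟦X⟧) {d e : ℤ} (hde : d + e = 0) :
    ((l : R⸨X⸩) * DerivT (HahnSeries.single d 1 * (p : R⸨X⸩)) *
      (HahnSeries.single e 1 * (q : R⸨X⸩))).coeff (-1) = 0 := by
  have hsplit : (l : R⸨X⸩) * DerivT (HahnSeries.single d 1 * (p : R⸨X⸩)) *
      (HahnSeries.single e 1 * (q : R⸨X⸩)) =
      HahnSeries.single (-1) (d : R) * ((l * p * q : R⟦X⟧) : R⸨X⸩) +
        ((l * d⁄dX R p * q : R⟦X⟧) : R⸨X⸩) := by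
    have hs₁ : HahnSeries.single (d - 1) (d : R) * HahnSeries.single e 1 =
        HahnSeries.single (-1) (d : R) := by
      rw [HahnSeries.single_mul_single, mul_one, show d - 1 + e = -1 by omega]
    have hs₂ : HahnSeries.single d (1 : R) * HahnSeries.single e 1 = 1 := by
      rw [HahnSeries.single_mul_single, mul_one, hde, HahnSeries.single_zero_one]
    rw [DerivT_single_one_mul, DerivT_ofPowerSeries, ← hs₁]
    push_cast
    linear_combination ((l : R⸨X⸩) * (d⁄dX R p : R⸨X⸩) * (q : R⸨X⸩)) * hs₂
  have hres := HahnSeries.coeff_single_mul_add (r := (d : R)) (x := ((l * p * q : R⟦X⟧) : R⸨X⸩))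
    (a := 0) (b := -1)
  rw [zero_add, PowerSeries.coeff_coe, if_neg (lt_irrefl 0), Int.natAbs_zero,
    PowerSeries.coeff_zero_eq_constantCoeff_apply, map_mul PowerSeries.constantCoeff,
    map_mul PowerSeries.constantCoeff, hl, zero_mul, zero_mul, mul_zero] at hres
  rw [hsplit, HahnSeries.coeff_add, hres, PowerSeries.coeff_coe, if_pos (by norm_num), add_zero]

lemma constantCoeff_logS [Algebra ℚ R] (f : R⟦X⟧) : PowerSeries.constantCoeff (logS f) = 0 := by
  rw [← PowerSeries.coeff_zero_eq_constantCoeff_apply, logS, PowerSeries.coeff_mk,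
    Finset.Icc_eq_empty (by norm_num), Finset.sum_empty, neg_zero, map_zero]

lemma coeff_neg_one_ofPowerSeries_mul_DerivT_mul_inv_eq_zero {K : Type*} [CommRing K] [IsDomain K]
    {l : K⟦X⟧} (hl : PowerSeries.constantCoeff l = 0) (a : (K⸨X⸩)ˣ) :
    ((l : K⸨X⸩) * DerivT (a : K⸨X⸩) * ((a⁻¹ : (K⸨X⸩)ˣ) : K⸨X⸩)).coeff (-1) = 0 := by
  have hord : (a : K⸨X⸩).order + ((a⁻¹ : (K⸨X⸩)ˣ) : K⸨X⸩).order = 0 := by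
    rw [← HahnSeries.order_mul a.ne_zero a⁻¹.ne_zero, a.mul_inv, HahnSeries.order_one]
  have h := coeff_neg_one_ofPowerSeries_mul_DerivT_mul_eq_zero hl
    (a : K⸨X⸩).powerSeriesPart ((a⁻¹ : (K⸨X⸩)ˣ) : K⸨X⸩).powerSeriesPart hord
  rwa [LaurentSeries.single_order_mul_powerSeriesPart,
    LaurentSeries.single_order_mul_powerSeriesPart] at h

section Map

variable {S : Type*} [CommRing S] (φ : R →+* S)

def laurentSeriesMap : R⸨X⸩ →+* S⸨X⸩ where
  toFun x := x.map φ
  map_one' := HahnSeries.map_one φ.toMonoidWithZeroHom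
  map_mul' _ _ := HahnSeries.map_mul φ.toNonUnitalRingHom
  map_zero' := HahnSeries.map_zero φ.toZeroHom
  map_add' _ _ := HahnSeries.map_add φ.toAddMonoidHom

@[simp]
lemma coeff_laurentSeriesMap (x : R⸨X⸩) (n : ℤ) :
    (laurentSeriesMap φ x).coeff n = φ (x.coeff n) :=
  rfl

lemma laurentSeriesMap_ofPowerSeries (p : R⟦X⟧) :
    laurentSeriesMap φ p = (PowerSeries.map φ p : S⸨X⸩) := by
  ext n
  simp only [coeff_laurentSeriesMap, PowerSeries.coeff_coe, PowerSeries.coeff_map]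
  split_ifs <;> simp

lemma laurentSeriesMap_DerivT (x : R⸨X⸩) :
    laurentSeriesMap φ (DerivT x) = DerivT (laurentSeriesMap φ x) := by
  ext n
  simp

end Map

theorem isNilpotent_res_log_mul_dlog [Algebra ℚ R]
    (f : PowerSeries R)
    (g : (LaurentSeries R)ˣ) :
    IsNilpotent
      ((((HahnSeries.ofPowerSeries ℤ R) (logS f) : LaurentSeries R) *
          DerivT (g : LaurentSeries R) * ((g⁻¹ : (LaurentSeries R)ˣ) : LaurentSeries R)).coeff
        (-1)) := by
  refine nilpotent_iff_mem_prime.mpr fun J _ => ?_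
  have hl : PowerSeries.constantCoeff (PowerSeries.map (Ideal.Quotient.mk J) (logS f)) = 0 := by
    rw [← PowerSeries.coeff_zero_eq_constantCoeff_apply, PowerSeries.coeff_map,
      PowerSeries.coeff_zero_eq_constantCoeff_apply, constantCoeff_logS, map_zero]
  have h := coeff_neg_one_ofPowerSeries_mul_DerivT_mul_inv_eq_zero hl
    (Units.map (laurentSeriesMap (Ideal.Quotient.mk J)).toMonoidHom g)
  rwa [Units.coe_map, Units.coe_map_inv, RingHom.toMonoidHom_eq_coe, MonoidHom.coe_coe,
    ← laurentSeriesMap_ofPowerSeries, ← laurentSeriesMap_DerivT, ← map_mul, ← map_mul,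
    coeff_laurentSeriesMap, Ideal.Quotient.eq_zero_iff_mem] at h

end CC
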